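/- arXiv:1010.3217 — 5 statements merged into one kernel-verified Lean document; each statement's English description precedes it below -/
import Mathlib

section
/- For natural numbers n₁ ≥ 1 and n₂ ≥ 1, the binomial identity 2 · (n₁+n₂)! / (n₁! · 1! · (n₂-1)!) = C(n₁+n₂, n₁) + C(n₁+n₂, n₁+1) + C(n₁+n₂, n₁+1) · n₁ + C(n₁+n₂, n₁) · (n₂-1) holds, where C(a,b) denotes the binomial coefficient and (n₁+n₂)!/(n₁!·1!·(n₂-1)!) is the multinomial coefficient for the composition (n₁, 1, n₂-1) of n₁+n₂. -/
/-- The binomial identity verifying the recursion of Algorithm I in the case `q = 1`. -/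
theorem stmt_2 (n₁ n₂ : ℕ) (h₁ : 1 ≤ n₁) (h₂ : 1 ≤ n₂) :
    2 * (Nat.factorial (n₁ + n₂) /
        (Nat.factorial n₁ * Nat.factorial 1 * Nat.factorial (n₂ - 1))) =
      Nat.choose (n₁ + n₂) n₁ + Nat.choose (n₁ + n₂) (n₁ + 1) +
        Nat.choose (n₁ + n₂) (n₁ + 1) * n₁ +
        Nat.choose (n₁ + n₂) n₁ * (n₂ - 1) := by
  obtain ⟨m, rfl⟩ : ∃ m, n₂ = m + 1 := ⟨n₂ - 1, by omega⟩
  have hle : n₁ ≤ n₁ + (m + 1) := by omega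
  have hC := Nat.choose_mul_factorial_mul_factorial hle
  have hsub : n₁ + (m + 1) - n₁ = m + 1 := by omega
  rw [hsub] at hC
  set C := (n₁ + (m + 1)).choose n₁ with hCdef
  have hfac : (n₁ + (m + 1)).factorial = C * (m + 1) * (n₁.factorial * Nat.factorial 1 * m.factorial) := by
    rw [hC.symm]
    simp [Nat.factorial_succ, Nat.factorial]
    ring
  have hdiv : (n₁ + (m + 1)).factorial / (n₁.factorial * Nat.factorial 1 * m.factorial) = C * (m + 1) := by
    rw [hfac, Nat.mul_div_cancel]
    positivity
  have hright : (n₁ + (m + 1)).choose (n₁ + 1) * (n₁ + 1) = C * (m + 1) := by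
    rw [Nat.choose_succ_right_eq, hsub]
  simp only [Nat.add_sub_cancel]
  rw [hdiv]
  have h3 : (n₁ + (m + 1)).choose (n₁ + 1) + (n₁ + (m + 1)).choose (n₁ + 1) * n₁ = C * (m + 1) := by
    rw [← hright]; ring
  have h4 : C + C * m = C * (m + 1) := by ring
  omega
end

section
/- In a triangulated category 𝓑 with strictly full additive subcategories 𝓑₀, 𝓑₁ such that every object of 𝓑 decomposes as a direct sum of an object of 𝓑₀ and an object of 𝓑₁, 𝓑₀[1] = 𝓑₁, 𝓑₁[1] = 𝓑₀, and Hom(𝓑₀, 𝓑₁) = 0: if (A, B, C) is a distinguished triangle with A and C in 𝓑₀, then B belongs to 𝓑₀. -/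
open CategoryTheory Limits Pretriangulated

/-- Extension Lemma: in a triangulated category `𝓑` with strictly full additive
subcategories `𝓑₀`, `𝓑₁` such that `𝓑 = 𝓑₀ ⊕ 𝓑₁`, `𝓑₀[1] = 𝓑₁`, `𝓑₁[1] = 𝓑₀`
and `Hom(𝓑₀, 𝓑₁) = 0`, every distinguished triangle `(A, B, C)` with `A, C ∈ 𝓑₀`
has `B ∈ 𝓑₀`. -/
theorem stmt_7 (𝓑 : Type*) [Category 𝓑] [Preadditive 𝓑] [HasZeroObject 𝓑]
    [HasBinaryBiproducts 𝓑] [HasShift 𝓑 ℤ] [∀ n : ℤ, (shiftFunctor 𝓑 n).Additive]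
    [Pretriangulated 𝓑] [IsTriangulated 𝓑]
    (P₀ P₁ : 𝓑 → Prop)
    -- strictly full additive subcategories
    (h₀iso : ∀ X Y : 𝓑, (X ≅ Y) → P₀ X → P₀ Y)
    (h₁iso : ∀ X Y : 𝓑, (X ≅ Y) → P₁ X → P₁ Y)
    (h₀zero : ∀ X : 𝓑, Limits.IsZero X → P₀ X)
    (h₁zero : ∀ X : 𝓑, Limits.IsZero X → P₁ X)
    (h₀sum : ∀ X Y : 𝓑, P₀ X → P₀ Y → P₀ (X ⊞ Y))
    (h₁sum : ∀ X Y : 𝓑, P₁ X → P₁ Y → P₁ (X ⊞ Y))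
    -- (1) every object decomposes as a biproduct of objects of 𝓑₀ and 𝓑₁
    (hdec : ∀ X : 𝓑, ∃ (X₀ X₁ : 𝓑), P₀ X₀ ∧ P₁ X₁ ∧ Nonempty (X ≅ X₀ ⊞ X₁))
    -- (2) and (3): the shift interchanges 𝓑₀ and 𝓑₁
    (hshift₀ : ∀ X : 𝓑, P₀ X → P₁ (X⟦(1 : ℤ)⟧))
    (hshift₁ : ∀ X : 𝓑, P₁ X → P₀ (X⟦(1 : ℤ)⟧))
    -- (4) no nonzero morphisms from 𝓑₀ to 𝓑₁
    (hhom : ∀ (X Y : 𝓑) (f : X ⟶ Y), P₀ X → P₁ Y → f = 0)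
    (T : Triangle 𝓑) (hT : T ∈ distTriang 𝓑)
    (hA : P₀ T.obj₁) (hC : P₀ T.obj₃) :
    P₀ T.obj₂ := by
  obtain ⟨B₀, B₁, hB₀, hB₁, ⟨e⟩⟩ := hdec T.obj₂
  have hp : T.mor₁ ≫ (e.hom ≫ biprod.snd) = 0 := hhom _ _ _ hA hB₁
  obtain ⟨g, hg⟩ := Triangle.yoneda_exact₂ T hT (e.hom ≫ biprod.snd) hp
  have hg0 : g = 0 := hhom _ _ _ hC hB₁
  have hpz : e.hom ≫ biprod.snd = 0 := by rw [hg, hg0, comp_zero]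
  have hzero : IsZero B₁ := by
    rw [IsZero.iff_id_eq_zero]
    have : biprod.inr ≫ e.inv ≫ e.hom ≫ biprod.snd = 𝟙 B₁ := by simp
    rw [← this, hpz, comp_zero, comp_zero]
  exact h₀iso _ _ e.symm (h₀sum _ _ hB₀ (h₀zero _ hzero))
end

section
/- In a triangulated category 𝓑 with strictly full additive subcategories 𝓑₀, 𝓑₁ satisfying: 𝓑 = 𝓑₀ ⊕ 𝓑₁, 𝓑₀[1] = 𝓑₁, 𝓑₁[1] = 𝓑₀, and Hom(𝓑₀, 𝓑₁) = 0, the subcategory 𝓑₀ is an abelian category in which the short exact sequences correspond to distinguished triangles (A, B, C) with all vertices in 𝓑₀. -/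
/-!
Since `Hom(𝓑₀, 𝓑₁) = 0` and, after shifting, `Hom(𝓑₁, 𝓑₀) = 0`, the `𝓑₀`-summand of an object
is indistinguishable from the object itself for morphisms to and from `𝓑₀`. For a distinguished
triangle `X → Y → Z → X⟦1⟧`, the long exact `Hom`-sequences together with these vanishings make
`Y → Z` a cokernel of `X → Y` relative to `𝓑₀` when `X ∈ 𝓑₀`, and `X → Y` a kernel of `Y → Z`
relative to `𝓑₀` when `Z ∈ 𝓑₀`. Passing to `𝓑₀`-summands of cones gives kernels and cokernels
in `𝓑₀`; and a monomorphism (epimorphism) of `𝓑₀` is, by the same exact sequences, the kernel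
(cokernel) of the `𝓑₀`-summand of its cone (cocone), so `𝓑₀` is abelian.
-/

open CategoryTheory Limits Pretriangulated

namespace CategoryTheory

section Relative

variable {C : Type*} [Category C] [HasZeroMorphisms C] (P : ObjectProperty C)

def IsRelMono {X Y : C} (f : X ⟶ Y) : Prop :=
  ∀ W, P W → ∀ g : W ⟶ X, g ≫ f = 0 → g = 0

def IsRelEpi {X Y : C} (f : X ⟶ Y) : Prop :=
  ∀ W, P W → ∀ g : Y ⟶ W, f ≫ g = 0 → g = 0

def IsRelKernel {K X Y : C} (k : K ⟶ X) (f : X ⟶ Y) : Prop :=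
  ∀ W, P W → ∀ g : W ⟶ X, g ≫ f = 0 → ∃! u : W ⟶ K, u ≫ k = g

def IsRelCokernel {X Y Q : C} (f : X ⟶ Y) (c : Y ⟶ Q) : Prop :=
  ∀ W, P W → ∀ g : Y ⟶ W, f ≫ g = 0 → ∃! u : Q ⟶ W, c ≫ u = g

/-- `Z₀` is the `P`-summand of `Z`: a retract which morphisms from and to objects of `P` cannot
tell apart from `Z`. -/
structure IsRelComponent {Z₀ Z : C} (s : Z₀ ⟶ Z) (r : Z ⟶ Z₀) : Prop where
  section_retraction : s ≫ r = 𝟙 Z₀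
  comp_retraction_section : ∀ W, P W → ∀ u : W ⟶ Z, u ≫ r ≫ s = u
  retraction_section_comp : ∀ W, P W → ∀ v : Z ⟶ W, r ≫ s ≫ v = v

variable {P}

namespace IsRelComponent

variable {Z₀ Z : C} {s : Z₀ ⟶ Z} {r : Z ⟶ Z₀}

lemma isRelMono_retraction (h : IsRelComponent P s r) : IsRelMono P r := fun W hW u hu => by
  rw [← h.comp_retraction_section W hW u, reassoc_of% hu, zero_comp]

lemma isRelEpi_section (h : IsRelComponent P s r) : IsRelEpi P s := fun W hW v hv => by
  rw [← h.retraction_section_comp W hW v, hv, comp_zero]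

end IsRelComponent

lemma IsRelKernel.section_comp {K₀ K X Y : C} {k : K ⟶ X} {f : X ⟶ Y} (hk : IsRelKernel P k f)
    {s : K₀ ⟶ K} {r : K ⟶ K₀} (h : IsRelComponent P s r) : IsRelKernel P (s ≫ k) f := by
  intro W hW g hg
  obtain ⟨u, rfl, hu⟩ := hk W hW g hg
  refine ⟨u ≫ r, ?_, fun u' hu' => ?_⟩
  · dsimp only
    rw [Category.assoc, reassoc_of% (h.comp_retraction_section W hW u)]
  · rw [← hu (u' ≫ s) (by simpa using hu'), Category.assoc, h.section_retraction,
      Category.comp_id]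

lemma IsRelCokernel.comp_retraction {X Y Q₀ Q : C} {f : X ⟶ Y} {c : Y ⟶ Q}
    (hc : IsRelCokernel P f c) {s : Q₀ ⟶ Q} {r : Q ⟶ Q₀} (h : IsRelComponent P s r) :
    IsRelCokernel P f (c ≫ r) := by
  intro W hW g hg
  obtain ⟨u, rfl, hu⟩ := hc W hW g hg
  refine ⟨s ≫ u, ?_, fun u' hu' => ?_⟩
  · dsimp only
    rw [Category.assoc, h.retraction_section_comp W hW u]
  · rw [← hu (r ≫ u') (by simpa using hu'), reassoc_of% h.section_retraction]

lemma IsRelKernel.comp_of_isRelMono {K X Y Y₀ : C} {k : K ⟶ X} {f : X ⟶ Y}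
    (hk : IsRelKernel P k f) {r : Y ⟶ Y₀} (hr : IsRelMono P r) : IsRelKernel P k (f ≫ r) :=
  fun W hW g hg => hk W hW g (hr W hW _ (by simpa using hg))

lemma IsRelCokernel.of_isRelEpi_comp {K₀ K X Y : C} {k : K ⟶ X} {c : X ⟶ Y}
    (hc : IsRelCokernel P k c) {s : K₀ ⟶ K} (hs : IsRelEpi P s) : IsRelCokernel P (s ≫ k) c :=
  fun W hW g hg => hc W hW g (hs W hW _ (by simpa using hg))

end Relative

section FullSubcategory

variable {C : Type*} [Category C] {P : ObjectProperty C}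

section ZeroMorphisms

variable [HasZeroMorphisms C]

lemma isRelMono_hom {X Y : P.FullSubcategory} (f : X ⟶ Y) [Mono f] : IsRelMono P f.hom :=
  fun W hW g hg => congrArg (·.hom) <| (cancel_mono f).1 <|
    show P.homMk g ≫ f = (0 : (⟨W, hW⟩ : P.FullSubcategory) ⟶ X) ≫ f from
      ObjectProperty.hom_ext _ (by simpa using hg)

lemma isRelEpi_hom {X Y : P.FullSubcategory} (f : X ⟶ Y) [Epi f] : IsRelEpi P f.hom :=
  fun W hW g hg => congrArg (·.hom) <| (cancel_epi f).1 <|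
    show f ≫ P.homMk g = f ≫ (0 : Y ⟶ (⟨W, hW⟩ : P.FullSubcategory)) from
      ObjectProperty.hom_ext _ (by simpa using hg)

noncomputable def IsRelKernel.isLimit {K X Y : P.FullSubcategory} {k : K ⟶ X} {f : X ⟶ Y}
    (w : k ≫ f = 0) (h : IsRelKernel P k.hom f.hom) : IsLimit (KernelFork.ofι k w) :=
  Fork.IsLimit.ofExistsUnique fun s => by
    obtain ⟨u, hu, huniq⟩ := h _ s.pt.2 (Fork.ι s).hom (congrArg (·.hom) (KernelFork.condition s))
    exact ⟨P.homMk u, ObjectProperty.hom_ext _ hu,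
      fun v hv => ObjectProperty.hom_ext _ (huniq v.hom (congrArg (·.hom) hv))⟩

noncomputable def IsRelCokernel.isColimit {X Y Q : P.FullSubcategory} {f : X ⟶ Y} {c : Y ⟶ Q}
    (w : f ≫ c = 0) (h : IsRelCokernel P f.hom c.hom) : IsColimit (CokernelCofork.ofπ c w) :=
  Cofork.IsColimit.ofExistsUnique fun s => by
    obtain ⟨u, hu, huniq⟩ :=
      h _ s.pt.2 (Cofork.π s).hom (congrArg (·.hom) (CokernelCofork.condition s))
    exact ⟨P.homMk u, ObjectProperty.hom_ext _ hu,
      fun v hv => ObjectProperty.hom_ext _ (huniq v.hom (congrArg (·.hom) hv))⟩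

end ZeroMorphisms

lemma hasBinaryBiproducts_fullSubcategory [Preadditive C] [HasBinaryBiproducts C]
    (h : ∀ X Y : C, P X → P Y → P (X ⊞ Y)) : HasBinaryBiproducts P.FullSubcategory :=
  ⟨fun X Y => hasBinaryBiproduct_of_total
    { pt := ⟨X.obj ⊞ Y.obj, h _ _ X.2 Y.2⟩
      fst := P.homMk biprod.fst
      snd := P.homMk biprod.snd
      inl := P.homMk biprod.inl
      inr := P.homMk biprod.inr
      inl_fst := ObjectProperty.hom_ext _ biprod.inl_fst
      inl_snd := ObjectProperty.hom_ext _ biprod.inl_snd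
      inr_fst := ObjectProperty.hom_ext _ biprod.inr_fst
      inr_snd := ObjectProperty.hom_ext _ biprod.inr_snd } (ObjectProperty.hom_ext _ biprod.total)⟩

end FullSubcategory

section Triangulated

variable {𝓑 : Type*} [Category 𝓑] [Preadditive 𝓑] [HasZeroObject 𝓑] [HasShift 𝓑 ℤ]
  [∀ n : ℤ, (shiftFunctor 𝓑 n).Additive] [Pretriangulated 𝓑] {P : ObjectProperty 𝓑}
  {T : Triangle 𝓑}

lemma isRelKernel_mor₁ (hT : T ∈ distTriang 𝓑) (h : IsRelMono P T.mor₁) :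
    IsRelKernel P T.mor₁ T.mor₂ := by
  intro W hW g hg
  obtain ⟨u, rfl⟩ := T.coyoneda_exact₂ hT g hg
  exact ⟨u, rfl, fun v hv => sub_eq_zero.1 (h W hW _ (by rw [Preadditive.sub_comp, hv, sub_self]))⟩

lemma isRelCokernel_mor₂ (hT : T ∈ distTriang 𝓑) (h : IsRelEpi P T.mor₂) :
    IsRelCokernel P T.mor₁ T.mor₂ := by
  intro W hW g hg
  obtain ⟨u, rfl⟩ := T.yoneda_exact₂ hT g hg
  exact ⟨u, rfl, fun v hv => sub_eq_zero.1 (h W hW _ (by rw [Preadditive.comp_sub, hv, sub_self]))⟩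

end Triangulated

section Decomposition

variable {𝓑 : Type*} [Category 𝓑] [Preadditive 𝓑] [HasBinaryBiproducts 𝓑] [HasShift 𝓑 ℤ]

structure IsAlternatingDecomposition (P₀ P₁ : ObjectProperty 𝓑) : Prop where
  exists_iso_biprod : ∀ X : 𝓑, ∃ X₀ X₁ : 𝓑, P₀ X₀ ∧ P₁ X₁ ∧ Nonempty (X ≅ X₀ ⊞ X₁)
  shift₀ : ∀ X : 𝓑, P₀ X → P₁ (X⟦(1 : ℤ)⟧)
  shift₁ : ∀ X : 𝓑, P₁ X → P₀ (X⟦(1 : ℤ)⟧)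
  hom_eq_zero₀₁ : ∀ (X Y : 𝓑) (f : X ⟶ Y), P₀ X → P₁ Y → f = 0

namespace IsAlternatingDecomposition

variable [∀ n : ℤ, (shiftFunctor 𝓑 n).Additive] {P₀ P₁ : ObjectProperty 𝓑}
  (S : IsAlternatingDecomposition P₀ P₁)
include S

lemma hom_eq_zero₁₀ {X Y : 𝓑} (f : X ⟶ Y) (hX : P₁ X) (hY : P₀ Y) : f = 0 :=
  (shiftFunctor 𝓑 (1 : ℤ)).map_injective <| by
    rw [S.hom_eq_zero₀₁ _ _ (f⟦(1 : ℤ)⟧') (S.shift₁ X hX) (S.shift₀ Y hY),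
      Functor.map_zero]

lemma exists_isRelComponent (Z : 𝓑) :
    ∃ (Z₀ : 𝓑) (s : Z₀ ⟶ Z) (r : Z ⟶ Z₀), P₀ Z₀ ∧ IsRelComponent P₀ s r := by
  obtain ⟨Z₀, Z₁, h₀, h₁, ⟨e⟩⟩ := S.exists_iso_biprod Z
  refine ⟨Z₀, biprod.inl ≫ e.inv, e.hom ≫ biprod.fst, h₀,
    ⟨by simp, fun W hW u => ?_, fun W hW v => ?_⟩⟩
  · have : u ≫ e.hom ≫ biprod.snd = 0 := S.hom_eq_zero₀₁ _ _ _ hW h₁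
    rw [← cancel_mono e.hom]
    ext <;> simp [this]
  · have : biprod.inr ≫ e.inv ≫ v = 0 := S.hom_eq_zero₁₀ _ h₁ hW
    rw [← cancel_epi e.inv]
    ext <;> simp [this]

variable [HasZeroObject 𝓑] [Pretriangulated 𝓑] {T : Triangle 𝓑}

lemma isRelMono_mor₁ (hT : T ∈ distTriang 𝓑) (h₃ : P₀ T.obj₃) : IsRelMono P₀ T.mor₁ := by
  intro W hW g hg
  obtain ⟨a, ha⟩ := T.coyoneda_exact₁ hT (g⟦(1 : ℤ)⟧')
    (by rw [← Functor.map_comp, hg, Functor.map_zero])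
  rw [S.hom_eq_zero₁₀ a (S.shift₀ W hW) h₃, zero_comp] at ha
  exact (shiftFunctor 𝓑 (1 : ℤ)).map_injective (by rw [ha, Functor.map_zero])

lemma isRelEpi_mor₂ (hT : T ∈ distTriang 𝓑) (h₁ : P₀ T.obj₁) : IsRelEpi P₀ T.mor₂ := by
  intro W hW g hg
  obtain ⟨a, rfl⟩ := T.yoneda_exact₃ hT g hg
  rw [S.hom_eq_zero₁₀ a (S.shift₀ _ h₁) hW, comp_zero]

lemma exists_isRelKernel {X Y : 𝓑} (f : X ⟶ Y) (hY : P₀ Y) :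
    ∃ (K : 𝓑) (k : K ⟶ X), P₀ K ∧ k ≫ f = 0 ∧ IsRelKernel P₀ k f := by
  obtain ⟨K, k, h, hT⟩ := distinguished_cocone_triangle₁ f
  have hkf : k ≫ f = 0 := comp_distTriang_mor_zero₁₂ _ hT
  obtain ⟨K₀, s, r, hK₀, hs⟩ := S.exists_isRelComponent K
  refine ⟨K₀, s ≫ k, hK₀, by rw [Category.assoc, hkf, comp_zero], ?_⟩
  exact (isRelKernel_mor₁ hT (S.isRelMono_mor₁ hT hY)).section_comp hs

lemma exists_isRelCokernel {X Y : 𝓑} (f : X ⟶ Y) (hX : P₀ X) :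
    ∃ (Q : 𝓑) (c : Y ⟶ Q), P₀ Q ∧ f ≫ c = 0 ∧ IsRelCokernel P₀ f c := by
  obtain ⟨Z, g, h, hT⟩ := distinguished_cocone_triangle f
  have hfg : f ≫ g = 0 := comp_distTriang_mor_zero₁₂ _ hT
  obtain ⟨Q, s, r, hQ, hs⟩ := S.exists_isRelComponent Z
  refine ⟨Q, g ≫ r, hQ, by rw [reassoc_of% hfg, zero_comp], ?_⟩
  exact (isRelCokernel_mor₂ hT (S.isRelEpi_mor₂ hT hX)).comp_retraction hs

lemma exists_isRelKernel_of_isRelMono {X Y : 𝓑} {f : X ⟶ Y} (hf : IsRelMono P₀ f) :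
    ∃ (Q : 𝓑) (c : Y ⟶ Q), P₀ Q ∧ f ≫ c = 0 ∧ IsRelKernel P₀ f c := by
  obtain ⟨Z, g, h, hT⟩ := distinguished_cocone_triangle f
  have hfg : f ≫ g = 0 := comp_distTriang_mor_zero₁₂ _ hT
  obtain ⟨Q, s, r, hQ, hs⟩ := S.exists_isRelComponent Z
  refine ⟨Q, g ≫ r, hQ, by rw [reassoc_of% hfg, zero_comp], ?_⟩
  exact (isRelKernel_mor₁ hT hf).comp_of_isRelMono hs.isRelMono_retraction

lemma exists_isRelCokernel_of_isRelEpi {X Y : 𝓑} {f : X ⟶ Y} (hf : IsRelEpi P₀ f) :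
    ∃ (K : 𝓑) (k : K ⟶ X), P₀ K ∧ k ≫ f = 0 ∧ IsRelCokernel P₀ k f := by
  obtain ⟨K, k, h, hT⟩ := distinguished_cocone_triangle₁ f
  have hkf : k ≫ f = 0 := comp_distTriang_mor_zero₁₂ _ hT
  obtain ⟨K₀, s, r, hK₀, hs⟩ := S.exists_isRelComponent K
  refine ⟨K₀, s ≫ k, hK₀, by rw [Category.assoc, hkf, comp_zero], ?_⟩
  exact (isRelCokernel_mor₂ hT hf).of_isRelEpi_comp hs.isRelEpi_section

lemma nonempty_abelian (h₀zero : ∀ X : 𝓑, IsZero X → P₀ X)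
    (h₀sum : ∀ X Y : 𝓑, P₀ X → P₀ Y → P₀ (X ⊞ Y)) : Nonempty (Abelian P₀.FullSubcategory) := by
  have : P₀.ContainsZero := ⟨⟨_, isZero_zero 𝓑, h₀zero _ (isZero_zero 𝓑)⟩⟩
  have := hasBinaryBiproducts_fullSubcategory h₀sum
  have : HasFiniteProducts P₀.FullSubcategory := hasFiniteProducts_of_has_binary_and_terminal
  have : HasKernels P₀.FullSubcategory := ⟨fun {_ Y} f => by
    obtain ⟨K, k, hK, w, h⟩ := S.exists_isRelKernel f.hom Y.2
    exact HasLimit.mk ⟨_, IsRelKernel.isLimit (K := ⟨K, hK⟩) (k := P₀.homMk k)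
      (ObjectProperty.hom_ext _ w) h⟩⟩
  have : HasCokernels P₀.FullSubcategory := ⟨fun {X _} f => by
    obtain ⟨Q, c, hQ, w, h⟩ := S.exists_isRelCokernel f.hom X.2
    exact HasColimit.mk ⟨_, IsRelCokernel.isColimit (Q := ⟨Q, hQ⟩) (c := P₀.homMk c)
      (ObjectProperty.hom_ext _ w) h⟩⟩
  have : IsNormalMonoCategory P₀.FullSubcategory := ⟨fun f _ => by
    obtain ⟨Q, c, hQ, w, h⟩ := S.exists_isRelKernel_of_isRelMono (isRelMono_hom f)
    exact ⟨⟨⟨Q, hQ⟩, P₀.homMk c, ObjectProperty.hom_ext _ w, IsRelKernel.isLimit _ h⟩⟩⟩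
  have : IsNormalEpiCategory P₀.FullSubcategory := ⟨fun f _ => by
    obtain ⟨K, k, hK, w, h⟩ := S.exists_isRelCokernel_of_isRelEpi (isRelEpi_hom f)
    exact ⟨⟨⟨K, hK⟩, P₀.homMk k, ObjectProperty.hom_ext _ w, IsRelCokernel.isColimit _ h⟩⟩⟩
  exact ⟨{ }⟩

end IsAlternatingDecomposition

end Decomposition

end CategoryTheory

/-- In a triangulated category `𝓑` with strictly full additive subcategories
`𝓑₀`, `𝓑₁` satisfying `𝓑 = 𝓑₀ ⊕ 𝓑₁`, `𝓑₀[1] = 𝓑₁`, `𝓑₁[1] = 𝓑₀` and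
`Hom(𝓑₀, 𝓑₁) = 0`, the subcategory `𝓑₀` is abelian, and distinguished
triangles with all vertices in `𝓑₀` yield short exact sequences in `𝓑₀`:
the first morphism is a kernel of the second, and the second a cokernel of the
first, relative to test objects in `𝓑₀`. -/
theorem stmt_8 (𝓑 : Type*) [Category 𝓑] [Preadditive 𝓑] [HasZeroObject 𝓑]
    [HasBinaryBiproducts 𝓑] [HasShift 𝓑 ℤ] [∀ n : ℤ, (shiftFunctor 𝓑 n).Additive]
    [Pretriangulated 𝓑] [IsTriangulated 𝓑]
    (P₀ P₁ : 𝓑 → Prop)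
    -- strictly full additive subcategories
    (h₀iso : ∀ X Y : 𝓑, (X ≅ Y) → P₀ X → P₀ Y)
    (h₁iso : ∀ X Y : 𝓑, (X ≅ Y) → P₁ X → P₁ Y)
    (h₀zero : ∀ X : 𝓑, Limits.IsZero X → P₀ X)
    (h₁zero : ∀ X : 𝓑, Limits.IsZero X → P₁ X)
    (h₀sum : ∀ X Y : 𝓑, P₀ X → P₀ Y → P₀ (X ⊞ Y))
    (h₁sum : ∀ X Y : 𝓑, P₁ X → P₁ Y → P₁ (X ⊞ Y))
    -- (1) every object decomposes as a biproduct of objects of 𝓑₀ and 𝓑₁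
    (hdec : ∀ X : 𝓑, ∃ (X₀ X₁ : 𝓑), P₀ X₀ ∧ P₁ X₁ ∧ Nonempty (X ≅ X₀ ⊞ X₁))
    -- (2) and (3): the shift interchanges 𝓑₀ and 𝓑₁
    (hshift₀ : ∀ X : 𝓑, P₀ X → P₁ (X⟦(1 : ℤ)⟧))
    (hshift₁ : ∀ X : 𝓑, P₁ X → P₀ (X⟦(1 : ℤ)⟧))
    -- (4) no nonzero morphisms from 𝓑₀ to 𝓑₁
    (hhom : ∀ (X Y : 𝓑) (f : X ⟶ Y), P₀ X → P₁ Y → f = 0) :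
    Nonempty (Abelian (ObjectProperty.FullSubcategory fun X : 𝓑 => P₀ X)) ∧
      ∀ (T : Triangle 𝓑), (T ∈ distTriang 𝓑) →
        P₀ T.obj₁ → P₀ T.obj₂ → P₀ T.obj₃ →
        (∀ W : 𝓑, P₀ W → ∀ g : W ⟶ T.obj₂, g ≫ T.mor₂ = 0 →
            ∃! u : W ⟶ T.obj₁, u ≫ T.mor₁ = g) ∧
          (∀ W : 𝓑, P₀ W → ∀ g : T.obj₂ ⟶ W, T.mor₁ ≫ g = 0 →
            ∃! u : T.obj₃ ⟶ W, T.mor₂ ≫ u = g) := by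
  have S : IsAlternatingDecomposition P₀ P₁ := ⟨hdec, hshift₀, hshift₁, hhom⟩
  exact ⟨S.nonempty_abelian h₀zero h₀sum, fun T hT h₁ _ h₃ =>
    ⟨isRelKernel_mor₁ hT (S.isRelMono_mor₁ hT h₃), isRelCokernel_mor₂ hT (S.isRelEpi_mor₂ hT h₁)⟩⟩
end

section
/- In a triangulated category 𝓑 with strictly full additive subcategories 𝓑₀, 𝓑₁ satisfying 𝓑 = 𝓑₀ ⊕ 𝓑₁, 𝓑₀[1] = 𝓑₁, 𝓑₁[1] = 𝓑₀, and Hom(𝓑₀, 𝓑₁) = 0, the abelian category 𝓑₀ is semisimple: every short exact sequence in 𝓑₀ splits. -/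
open CategoryTheory Limits Pretriangulated

/-- In a triangulated category `𝓑` with strictly full additive subcategories
`𝓑₀`, `𝓑₁` satisfying `𝓑 = 𝓑₀ ⊕ 𝓑₁`, `𝓑₀[1] = 𝓑₁`, `𝓑₁[1] = 𝓑₀` and
`Hom(𝓑₀, 𝓑₁) = 0`, the abelian category `𝓑₀` is semisimple: every short
exact sequence in `𝓑₀` (i.e. every distinguished triangle with all vertices
in `𝓑₀`) splits, the connecting morphism being zero. -/
theorem stmt_9 (𝓑 : Type*) [Category 𝓑] [Preadditive 𝓑] [HasZeroObject 𝓑]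
    [HasBinaryBiproducts 𝓑] [HasShift 𝓑 ℤ] [∀ n : ℤ, (shiftFunctor 𝓑 n).Additive]
    [Pretriangulated 𝓑] [IsTriangulated 𝓑]
    (P₀ P₁ : 𝓑 → Prop)
    -- strictly full additive subcategories
    (h₀iso : ∀ X Y : 𝓑, (X ≅ Y) → P₀ X → P₀ Y)
    (h₁iso : ∀ X Y : 𝓑, (X ≅ Y) → P₁ X → P₁ Y)
    (h₀zero : ∀ X : 𝓑, Limits.IsZero X → P₀ X)
    (h₁zero : ∀ X : 𝓑, Limits.IsZero X → P₁ X)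
    (h₀sum : ∀ X Y : 𝓑, P₀ X → P₀ Y → P₀ (X ⊞ Y))
    (h₁sum : ∀ X Y : 𝓑, P₁ X → P₁ Y → P₁ (X ⊞ Y))
    -- (1) every object decomposes as a biproduct of objects of 𝓑₀ and 𝓑₁
    (hdec : ∀ X : 𝓑, ∃ (X₀ X₁ : 𝓑), P₀ X₀ ∧ P₁ X₁ ∧ Nonempty (X ≅ X₀ ⊞ X₁))
    -- (2) and (3): the shift interchanges 𝓑₀ and 𝓑₁
    (hshift₀ : ∀ X : 𝓑, P₀ X → P₁ (X⟦(1 : ℤ)⟧))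
    (hshift₁ : ∀ X : 𝓑, P₁ X → P₀ (X⟦(1 : ℤ)⟧))
    -- (4) no nonzero morphisms from 𝓑₀ to 𝓑₁
    (hhom : ∀ (X Y : 𝓑) (f : X ⟶ Y), P₀ X → P₁ Y → f = 0)
    (T : Triangle 𝓑) (hT : T ∈ distTriang 𝓑)
    (h₁ : P₀ T.obj₁) (h₂ : P₀ T.obj₂) (h₃ : P₀ T.obj₃) :
    T.mor₃ = 0 ∧ Nonempty (T.obj₂ ≅ T.obj₁ ⊞ T.obj₃) := by
  have hz : T.mor₃ = 0 := hhom _ _ _ h₃ (hshift₀ _ h₁)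
  obtain ⟨e, -, -⟩ := exists_iso_binaryBiproduct_of_distTriang T hT hz
  exact ⟨hz, ⟨e⟩⟩
end

section
/- Let λ be a partition with λ_{m+1} ≤ n and m ≥ n. The associated sets I_×(μ) = {μ₁, μ₂−1, ..., μ_m−m+1} and I_∘(μ) = {1−m−μ_{m+1}, ..., n−m−μ_{m+n}}, where μᵢ = λᵢ for i ≤ m and μ_{m+i} = max(0,(λ*)ᵢ−m), satisfy I_×(μ) ∩ I_∘(μ) = I_∘(μ) (maximal atypicality) if and only if λ_{m−n+1} = 0. -/
/-- Let `λ` be a partition with `λ_{m+1} ≤ n` and `m ≥ n`, and let `μ` be the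
highest weight of the covariant representation `{λ}`: `μᵢ = λᵢ` for `i ≤ m` and
`μ_{m+i} = max(0, (λ*)ᵢ − m)` where `λ*` is the conjugate partition. Then the
weight `μ` is maximal atypical, i.e. `I_×(μ) ∩ I_∘(μ) = I_∘(μ)` for
`I_×(μ) = {μ₁, μ₂ − 1, …, μ_m − m + 1}` and
`I_∘(μ) = {1 − m − μ_{m+1}, …, n − m − μ_{m+n}}`, if and only if
`λ_{m−n+1} = 0`. -/
theorem stmt_12 (m n : ℕ) (hmn : n ≤ m) (hn : 1 ≤ n) (lam : ℕ → ℕ)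
    (hdec : ∀ i j : ℕ, i ≤ j → lam j ≤ lam i)
    (hfin : ∃ N : ℕ, ∀ j : ℕ, N ≤ j → lam j = 0)
    (hhook : lam (m + 1) ≤ n)
    (conj : ℕ → ℕ) (hconj : ∀ i : ℕ, conj i = {j : ℕ | 1 ≤ j ∧ i ≤ lam j}.ncard)
    (μ : ℕ → ℤ) (hμlow : ∀ i : ℕ, 1 ≤ i → i ≤ m → μ i = lam i)
    (hμhigh : ∀ i : ℕ, 1 ≤ i → i ≤ n → μ (m + i) = (conj i - m : ℕ))
    (Itimes Iop : Finset ℤ)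
    (hItimes : Itimes = (Finset.Icc 1 m).image fun i : ℕ => μ i - i + 1)
    (hIop : Iop = (Finset.Icc 1 n).image fun i : ℕ => (i : ℤ) - m - μ (m + i)) :
    Itimes ∩ Iop = Iop ↔ lam (m - n + 1) = 0 := by
  obtain ⟨N, hN⟩ := hfin
  -- finiteness of the columns sets
  have hSfin : ∀ i : ℕ, 1 ≤ i → ({j : ℕ | 1 ≤ j ∧ i ≤ lam j}).Finite := by
    intro i hi
    apply (Set.finite_Ico 1 N).subset
    rintro j ⟨hj1, hj2⟩
    refine ⟨hj1, ?_⟩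
    by_contra h
    push_neg at h
    have := hN j h
    omega
  -- upper bound for conj
  have hconj_le : ∀ i K : ℕ, 1 ≤ i → lam (K + 1) < i → conj i ≤ K := by
    intro i K hi hK
    rw [hconj]
    have hsub : {j : ℕ | 1 ≤ j ∧ i ≤ lam j} ⊆ ↑(Finset.Icc 1 K) := by
      rintro j ⟨hj1, hj2⟩
      simp only [Finset.coe_Icc, Set.mem_Icc]
      refine ⟨hj1, ?_⟩
      by_contra h
      push_neg at h
      have := hdec (K + 1) j (by omega)
      omega
    have := Set.ncard_le_ncard hsub (Finset.Icc 1 K).finite_toSet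
    rw [Set.ncard_coe_finset, Nat.card_Icc] at this
    omega
  rw [Finset.inter_eq_right]
  constructor
  · -- maximal atypical → lam (m - n + 1) = 0
    intro h
    by_contra hk
    have hk1 : 1 ≤ lam (m - n + 1) := by omega
    by_cases hB : 1 ≤ lam (m + 1)
    · -- tail of lam nonzero: conj 1 ≥ m + 1 gives an element of Iop not in Itimes
      have hc : m + 1 ≤ conj 1 := by
        rw [hconj]
        have hsub : ↑(Finset.Icc 1 (m + 1)) ⊆ {j : ℕ | 1 ≤ j ∧ 1 ≤ lam j} := by
          intro j hj
          simp only [Finset.coe_Icc, Set.mem_Icc] at hj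
          exact ⟨hj.1, le_trans hB (hdec j (m + 1) hj.2)⟩
        have := Set.ncard_le_ncard hsub (hSfin 1 le_rfl)
        rw [Set.ncard_coe_finset, Nat.card_Icc] at this
        omega
      have hx : (1 : ℤ) - m - μ (m + 1) ∈ Iop := by
        rw [hIop]
        exact Finset.mem_image.2 ⟨1, Finset.mem_Icc.2 ⟨le_rfl, hn⟩, by norm_num⟩
      have hx' := h hx
      rw [hItimes, Finset.mem_image] at hx'
      obtain ⟨j, hj, hje⟩ := hx'
      rw [Finset.mem_Icc] at hj
      rw [hμlow j hj.1 hj.2] at hje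
      rw [hμhigh 1 le_rfl hn] at hje
      have hlamj : 1 ≤ lam j := le_trans hB (hdec j (m + 1) (by omega))
      omega
    · -- lam (m+1) = 0: all μ (m+i) vanish, counting argument
      have hμz : ∀ i : ℕ, 1 ≤ i → i ≤ n → μ (m + i) = 0 := by
        intro i hi hin
        have := hconj_le i m hi (by omega)
        rw [hμhigh i hi hin]
        have : conj i - m = 0 := by omega
        rw [this]
        norm_num
      set A : Finset ℤ := (Finset.Icc 1 n).image (fun i : ℕ => (i : ℤ) - m) with hA
      set B : Finset ℤ := (Finset.Icc (m - n + 2) m).image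
        (fun j : ℕ => (lam j : ℤ) - j + 1) with hB'
      have hAB : A ⊆ B := by
        intro x hx
        rw [hA, Finset.mem_image] at hx
        obtain ⟨i, hi, hix⟩ := hx
        rw [Finset.mem_Icc] at hi
        have hxIop : x ∈ Iop := by
          rw [hIop, Finset.mem_image]
          exact ⟨i, Finset.mem_Icc.2 hi, by rw [hμz i hi.1 hi.2]; omega⟩
        have hxIt := h hxIop
        rw [hItimes, Finset.mem_image] at hxIt
        obtain ⟨j, hj, hje⟩ := hxIt
        rw [Finset.mem_Icc] at hj
        rw [hμlow j hj.1 hj.2] at hje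
        rw [hB', Finset.mem_image]
        refine ⟨j, Finset.mem_Icc.2 ⟨?_, hj.2⟩, by omega⟩
        by_contra hjs
        push_neg at hjs
        have hlamj : 1 ≤ lam j := le_trans hk1 (hdec j (m - n + 1) (by omega))
        omega
      have hAcard : A.card = n := by
        rw [hA, Finset.card_image_of_injective _ (fun a b hab => by omega)]
        rw [Nat.card_Icc]
        omega
      have hBcard : B.card ≤ n - 1 := by
        calc B.card ≤ (Finset.Icc (m - n + 2) m).card := Finset.card_image_le
          _ = n - 1 := by rw [Nat.card_Icc]; omega
      have := Finset.card_le_card hAB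
      omega
  · -- lam (m - n + 1) = 0 → maximal atypical
    intro hz
    intro x hx
    rw [hIop, Finset.mem_image] at hx
    obtain ⟨i, hi, hix⟩ := hx
    rw [Finset.mem_Icc] at hi
    have hμz : μ (m + i) = 0 := by
      have := hconj_le i (m - n) hi.1 (by omega)
      rw [hμhigh i hi.1 hi.2]
      have : conj i - m = 0 := by omega
      rw [this]
      norm_num
    rw [hItimes, Finset.mem_image]
    refine ⟨m - i + 1, Finset.mem_Icc.2 ⟨by omega, by omega⟩, ?_⟩
    have hlj : lam (m - i + 1) = 0 :=
      Nat.le_antisymm (le_trans (hdec (m - n + 1) (m - i + 1) (by omega)) (by omega)) (Nat.zero_le _)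
    rw [hμlow (m - i + 1) (by omega) (by omega), hlj]
    rw [hμz] at hix
    push_cast
    omega
end
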